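/- Fix a rational $c > 0$. The set of semisimple balanced root systems $\Phi_{1,k_1}\cdots\Phi_{n,k_n}$ of central charge $c$ is finite. -/

import Mathlib

/-- The simple root systems of the standard classification. -/
inductive SimpleRS
  | A (ℓ : ℕ) | B (ℓ : ℕ) | C (ℓ : ℕ) | D (ℓ : ℕ)
  | E6 | E7 | E8 | F4 | G2
  deriving DecidableEq

namespace SimpleRS

/-- Validity of the rank parameter. -/
def valid : SimpleRS → Prop
  | A ℓ => 1 ≤ ℓ
  | B ℓ => 2 ≤ ℓ
  | C ℓ => 3 ≤ ℓ
  | D ℓ => 4 ≤ ℓ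
  | _ => True

/-- Dimension of the corresponding simple Lie algebra. -/
def dim : SimpleRS → ℕ
  | A ℓ => ℓ^2 + 2*ℓ
  | B ℓ => 2*ℓ^2 + ℓ
  | C ℓ => 2*ℓ^2 + ℓ
  | D ℓ => 2*ℓ^2 - ℓ
  | E6 => 78
  | E7 => 133
  | E8 => 248
  | F4 => 52
  | G2 => 14

/-- Dual Coxeter number. -/
def dcox : SimpleRS → ℕ
  | A ℓ => ℓ + 1
  | B ℓ => 2*ℓ - 1
  | C ℓ => ℓ + 1
  | D ℓ => 2*ℓ - 2
  | E6 => 12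
  | E7 => 18
  | E8 => 30
  | F4 => 9
  | G2 => 4

end SimpleRS

/-!
Every summand has central charge `k d / (k + h^∨) ≥ d / (1 + h^∨)`, at most `c`; since `d` is
quadratic and `h^∨` linear in the rank, this bounds `h^∨` by `2⌈c⌉ + 30`. The balance equation
`c h^∨ / k = d - c`, with `d` the total dimension, then gives `d ≤ c (1 + h^∨)`, bounding the number
of summands and their dimensions; and as the integer `d` exceeds `c`, it gives
`k ≤ c h^∨ / (⌊c⌋ + 1 - c)`. So the multisets in question have bounded size and are drawn from a
finite set of pairs.
-/

theorem Set.Finite.setOf_multiset_card_le {α : Type*} {T : Set α} (hT : T.Finite) (n : ℕ) :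
    {s : Multiset α | (∀ a ∈ s, a ∈ T) ∧ Multiset.card s ≤ n}.Finite := by
  classical
  refine (Set.finite_Icc 0 (n • hT.toFinset.val)).subset fun s ⟨hsT, hs⟩ => ?_
  refine ⟨Multiset.zero_le s, Multiset.le_iff_count.2 fun a => ?_⟩
  by_cases ha : a ∈ s
  · have : 1 ≤ Multiset.count a hT.toFinset.val :=
      Multiset.one_le_count_iff_mem.2 (by simpa using hsT a ha)
    rw [Multiset.count_nsmul]
    calc Multiset.count a s ≤ Multiset.card s := Multiset.count_le_card a s
      _ ≤ n * 1 := by omega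
      _ ≤ _ := Nat.mul_le_mul_left n this
  · simp [Multiset.count_eq_zero_of_notMem ha]

namespace SimpleRS

lemma one_le_dcox {Φ : SimpleRS} (hΦ : Φ.valid) : 1 ≤ Φ.dcox := by
  cases Φ <;> simp_all only [valid, dcox] <;> omega

lemma one_le_dim {Φ : SimpleRS} (hΦ : Φ.valid) : 1 ≤ Φ.dim := by
  cases Φ with
  | D ℓ =>
    simp only [valid, dim] at hΦ ⊢
    have := Nat.le_self_pow two_ne_zero ℓ
    omega
  | _ => simp_all only [valid, dim]; omega

lemma dcox_le_of_dim_le {Φ : SimpleRS} (hΦ : Φ.valid) {B : ℕ} (h : Φ.dim ≤ B * (Φ.dcox + 1)) :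
    Φ.dcox ≤ 2 * B + 30 := by
  cases Φ with
  | A ℓ => simp only [dim, dcox] at h ⊢; nlinarith
  | B ℓ =>
    simp only [valid] at hΦ
    simp only [dim, dcox, Nat.sub_add_cancel (by omega : 1 ≤ 2 * ℓ)] at h ⊢
    have : ℓ ≤ B := by nlinarith
    omega
  | C ℓ => simp only [dim, dcox] at h ⊢; nlinarith
  | D ℓ =>
    simp only [valid] at hΦ
    simp only [dim, dcox] at h ⊢
    have : ℓ ≤ B := by
      zify [(by nlinarith : ℓ ≤ 2 * ℓ ^ 2), (by omega : 2 ≤ 2 * ℓ)] at h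
      nlinarith
    omega
  | _ => simp only [dcox]; omega

lemma finite_setOf_dim_le (n : ℕ) : {Φ : SimpleRS | Φ.dim ≤ n}.Finite := by
  have hIic := Set.finite_Iic n
  refine ((((hIic.image A).union (hIic.image B)).union (hIic.image C)).union
    (hIic.image D)).union (Set.toFinite {E6, E7, E8, F4, G2}) |>.subset ?_
  intro Φ (h : Φ.dim ≤ n)
  have hsq (ℓ : ℕ) : ℓ ≤ ℓ ^ 2 := Nat.le_self_pow two_ne_zero ℓ
  cases Φ <;> simp only [dim] at h <;>
    simp only [Set.mem_union, Set.mem_image, Set.mem_Iic, reduceCtorEq, A.injEq, B.injEq, C.injEq,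
      D.injEq, exists_eq_right, Set.mem_insert_iff, Set.mem_singleton_iff, or_true, or_false]
  all_goals grind

def centralCharge (Φ : SimpleRS) (k : ℕ+) : ℚ := k * Φ.dim / (k + Φ.dcox)

lemma centralCharge_nonneg (Φ : SimpleRS) (k : ℕ+) : 0 ≤ Φ.centralCharge k := by
  unfold centralCharge; positivity

lemma dim_le_centralCharge_mul (Φ : SimpleRS) (k : ℕ+) :
    (Φ.dim : ℚ) ≤ Φ.centralCharge k * (1 + Φ.dcox) := by
  have hk : (1 : ℚ) ≤ k := by exact_mod_cast k.pos
  rw [centralCharge, div_mul_eq_mul_div, le_div_iff₀ (by positivity)]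
  have := mul_nonneg (Nat.cast_nonneg (α := ℚ) Φ.dim) (Nat.cast_nonneg (α := ℚ) Φ.dcox)
  nlinarith

lemma dcox_le_of_centralCharge_le {Φ : SimpleRS} (hΦ : Φ.valid) {k : ℕ+} {c : ℚ}
    (h : Φ.centralCharge k ≤ c) : Φ.dcox ≤ 2 * ⌈c⌉₊ + 30 := by
  refine dcox_le_of_dim_le hΦ (Nat.cast_le (α := ℚ) |>.1 ?_ : Φ.dim ≤ ⌈c⌉₊ * (Φ.dcox + 1))
  calc (Φ.dim : ℚ) ≤ Φ.centralCharge k * (1 + Φ.dcox) := dim_le_centralCharge_mul Φ k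
    _ ≤ ⌈c⌉₊ * (1 + Φ.dcox) := by gcongr; exact h.trans (Nat.le_ceil c)
    _ = _ := by push_cast; ring

end SimpleRS

open SimpleRS

def totalDim (s : Multiset (SimpleRS × ℕ+)) : ℕ := (s.map fun p => p.1.dim).sum

lemma dim_le_totalDim {s : Multiset (SimpleRS × ℕ+)} {p : SimpleRS × ℕ+} (hp : p ∈ s) :
    p.1.dim ≤ totalDim s :=
  Multiset.le_sum_of_mem (Multiset.mem_map_of_mem (fun p : SimpleRS × ℕ+ => p.1.dim) hp)

lemma card_le_totalDim {s : Multiset (SimpleRS × ℕ+)} (hs : ∀ p ∈ s, p.1.valid) :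
    Multiset.card s ≤ totalDim s := by
  simpa [totalDim] using Multiset.card_nsmul_le_sum (s := s.map fun p => p.1.dim) (a := 1)
    (Multiset.forall_mem_map_iff.2 fun p hp => one_le_dim (hs p hp))

structure IsBalanced (c : ℚ) (s : Multiset (SimpleRS × ℕ+)) : Prop where
  valid : ∀ p ∈ s, p.1.valid
  centralCharge_eq : c = (s.map fun p => p.1.centralCharge p.2).sum
  balance : ∀ p ∈ s, c * p.1.dcox / p.2 = totalDim s - c

namespace IsBalanced

variable {c : ℚ} {s : Multiset (SimpleRS × ℕ+)} {p : SimpleRS × ℕ+}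

lemma dcox_le (hs : IsBalanced c s) (hp : p ∈ s) : p.1.dcox ≤ 2 * ⌈c⌉₊ + 30 := by
  refine dcox_le_of_centralCharge_le (hs.valid p hp) (k := p.2) ?_
  rw [hs.centralCharge_eq]
  exact Multiset.single_le_sum
    (Multiset.forall_mem_map_iff.2 fun p _ => centralCharge_nonneg p.1 p.2) _
    (Multiset.mem_map_of_mem _ hp)

lemma totalDim_le (hs : IsBalanced c s) (hc : 0 ≤ c) (hp : p ∈ s) :
    (totalDim s : ℚ) ≤ c * (1 + p.1.dcox) := by
  have hk : (1 : ℚ) ≤ p.2 := by exact_mod_cast p.2.pos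
  have : c * p.1.dcox / p.2 ≤ c * p.1.dcox := div_le_self (by positivity) hk
  linarith [hs.balance p hp]

lemma totalDim_le_ceil (hs : IsBalanced c s) (hc : 0 ≤ c) :
    totalDim s ≤ ⌈c * (2 * ⌈c⌉₊ + 31)⌉₊ := by
  rcases Multiset.empty_or_exists_mem s with rfl | ⟨p, hp⟩
  · simp [totalDim]
  have hdcox : (p.1.dcox : ℚ) ≤ 2 * ⌈c⌉₊ + 30 := by exact_mod_cast hs.dcox_le hp
  have : (totalDim s : ℚ) ≤ c * (2 * ⌈c⌉₊ + 31) :=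
    (hs.totalDim_le hc hp).trans (mul_le_mul_of_nonneg_left (by linarith) hc)
  exact_mod_cast this.trans (Nat.le_ceil _)

lemma level_le (hs : IsBalanced c s) (hc : 0 < c) (hp : p ∈ s) :
    (p.2 : ℚ) ≤ c * p.1.dcox / (⌊c⌋₊ + 1 - c) := by
  have hk : (0 : ℚ) < p.2 := by exact_mod_cast p.2.pos
  have hh : (1 : ℚ) ≤ p.1.dcox := by exact_mod_cast one_le_dcox (hs.valid p hp)
  have hgap : 0 < (totalDim s : ℚ) - c := hs.balance p hp ▸ by positivity
  have hfloor : (⌊c⌋₊ : ℚ) + 1 ≤ totalDim s := by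
    exact_mod_cast (Nat.floor_lt hc.le).2 (by linarith)
  have heq : (p.2 : ℚ) = c * p.1.dcox / (totalDim s - c) := by
    rw [← hs.balance p hp]; field_simp
  rw [heq]
  gcongr
  · linarith [Nat.lt_floor_add_one c]

lemma level_le_ceil (hs : IsBalanced c s) (hc : 0 < c) (hp : p ∈ s) :
    (p.2 : ℕ) ≤ ⌈c * (2 * ⌈c⌉₊ + 30) / (⌊c⌋₊ + 1 - c)⌉₊ := by
  have hgap : 0 < (⌊c⌋₊ : ℚ) + 1 - c := by linarith [Nat.lt_floor_add_one c]
  have hdcox : (p.1.dcox : ℚ) ≤ 2 * ⌈c⌉₊ + 30 := by exact_mod_cast hs.dcox_le hp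
  have : (p.2 : ℚ) ≤ c * (2 * ⌈c⌉₊ + 30) / (⌊c⌋₊ + 1 - c) :=
    (hs.level_le hc hp).trans (by gcongr)
  exact_mod_cast this.trans (Nat.le_ceil _)

end IsBalanced

/-- For a fixed rational `c > 0`, the set of semisimple balanced root systems
`Φ_{1,k_1}…Φ_{n,k_n}` of central charge `c` is finite. -/
theorem semisimple_balanced_finite (c : ℚ) (hc : 0 < c) :
    {s : Multiset (SimpleRS × ℕ+) |
      (∀ p ∈ s, p.1.valid) ∧
      c = (s.map fun p => (p.2 : ℚ) * p.1.dim / ((p.2 : ℚ) + p.1.dcox)).sum ∧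
      (∀ p ∈ s, c * p.1.dcox / (p.2 : ℚ) =
        (s.map fun p => (p.1.dim : ℚ)).sum - c)}.Finite := by
  set D := ⌈c * (2 * ⌈c⌉₊ + 31)⌉₊
  set K := ⌈c * (2 * ⌈c⌉₊ + 30) / (⌊c⌋₊ + 1 - c)⌉₊
  have hlevels : {k : ℕ+ | (k : ℕ) ≤ K}.Finite :=
    (Set.finite_Iic K).preimage PNat.coe_injective.injOn
  refine (((finite_setOf_dim_le D).prod hlevels).setOf_multiset_card_le D).subset ?_
  rintro s ⟨hvalid, hcharge, hbalance⟩
  have hs : IsBalanced c s := ⟨hvalid, hcharge, by simpa [totalDim] using hbalance⟩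
  refine ⟨fun p hp => ⟨?_, hs.level_le_ceil hc hp⟩, ?_⟩
  · exact (dim_le_totalDim hp).trans (hs.totalDim_le_ceil hc.le)
  · exact (card_le_totalDim hs.valid).trans (hs.totalDim_le_ceil hc.le)
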